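/- arXiv:1909.10672 — 3 statements merged into one kernel-verified Lean document; each statement's English description precedes it below -/
import Mathlib

section
/- For any objects A and B of 𝒜, viewed as stalk complexes in degree 0, and any integer n ≥ 1, the Hom group Hom_{K^b(𝒜)/K^b(𝒳)}(Σ^{-n}(A), B) in the Verdier quotient is zero. -/
open CategoryTheory Limits ZeroObject Pretriangulated

set_option linter.unusedSectionVars false

universe v u

variable (A : Type u) [Category.{v} A] [Preadditive A] [HasZeroObject A]
  [HasBinaryBiproducts A]

/-- A cochain complex is bounded if its terms vanish outside a finite range of degrees. -/
def IsBddComplex {C : Type*} [Category C] [Preadditive C] (K : CochainComplex C ℤ) : Prop :=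
  ∃ a b : ℤ, ∀ i : ℤ, (i < a ∨ b < i) → Limits.IsZero (K.X i)

/-- The (unbounded) homotopy category `K(𝒜)`. -/
abbrev HtpyCat := HomotopyCategory A (ComplexShape.up ℤ)

/-- The bounded homotopy category `K^b(𝒜)`, the full subcategory of `K(𝒜)` whose objects
are the bounded complexes. -/
abbrev Kb := ObjectProperty.FullSubcategory (fun K : HtpyCat A => IsBddComplex K.as)

/-- The inclusion `K^b(𝒜) ⥤ K(𝒜)`. -/
abbrev KbInc : Kb A ⥤ HtpyCat A := ObjectProperty.ι _

variable (𝒳 : A → Prop)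

/-- An object of `K(𝒜)` belongs to (the isomorphism closure of) `K^b(𝒳)`: it is isomorphic
to a bounded complex all of whose terms lie in `𝒳`. -/
def InKbX (K : HtpyCat A) : Prop :=
  ∃ L : CochainComplex A ℤ, IsBddComplex L ∧ (∀ i : ℤ, 𝒳 (L.X i)) ∧
    Nonempty ((HomotopyCategory.quotient A (ComplexShape.up ℤ)).obj L ≅ K)

/-- The class of morphisms of `K^b(𝒜)` fitting in a distinguished triangle whose cone
belongs to `K^b(𝒳)`. The Verdier quotient `K^b(𝒜)/K^b(𝒳)` is by definition the
localization of `K^b(𝒜)` with respect to this class. -/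
def WX : MorphismProperty (Kb A) := fun K L f =>
  ∃ (Z : HtpyCat A) (g : (KbInc A).obj L ⟶ Z) (h : Z ⟶ ((KbInc A).obj K)⟦(1 : ℤ)⟧),
    (Triangle.mk ((KbInc A).map f) g h ∈ distTriang (HtpyCat A)) ∧ InKbX A 𝒳 Z

/-- The Verdier quotient `K^b(𝒜)/K^b(𝒳)`. -/
abbrev VerdierQuot := (WX A 𝒳).Localization

/-- The Verdier quotient functor `K^b(𝒜) ⥤ K^b(𝒜)/K^b(𝒳)`. -/
abbrev VQ : Kb A ⥤ VerdierQuot A 𝒳 := (WX A 𝒳).Q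

/-- The object of `K^b(𝒜)` given by the stalk complex concentrated in degree `n`. -/
noncomputable def stalkKb (n : ℤ) (a : A) : Kb A :=
  ⟨(HomotopyCategory.quotient A (ComplexShape.up ℤ)).obj
      ((HomologicalComplex.single A (ComplexShape.up ℤ) n).obj a),
    ⟨n, n, fun i hi => HomologicalComplex.isZero_single_obj_X
      (ComplexShape.up ℤ) n a i (by omega)⟩⟩

/-- `f` factors through an object of `𝒳`. -/
abbrev FactorsThruX {a b : A} (f : a ⟶ b) : Prop :=
  ∃ (T : A) (_ : 𝒳 T) (u : a ⟶ T) (v : T ⟶ b), u ≫ v = f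

/-- `𝒳` is a full additive subcategory: it is nonempty (hence contains a zero object up to
closure) and closed under finite direct sums. -/
class IsAdditiveSubcat : Prop where
  nonempty : ∃ T, 𝒳 T
  biprod_mem : ∀ ⦃T T' : A⦄, 𝒳 T → 𝒳 T' → 𝒳 (T ⊞ T')

variable {A 𝒳} in
theorem FactorsThruX.add [IsAdditiveSubcat A 𝒳] {a b : A} {f g : a ⟶ b}
    (hf : FactorsThruX A 𝒳 f) (hg : FactorsThruX A 𝒳 g) : FactorsThruX A 𝒳 (f + g) := by
  obtain ⟨T, hT, u, v, rfl⟩ := hf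
  obtain ⟨T', hT', u', v', rfl⟩ := hg
  exact ⟨T ⊞ T', IsAdditiveSubcat.biprod_mem hT hT', biprod.lift u u',
    biprod.desc v v', by simp⟩

/-- The ideal relation on `𝒜` defined by `𝒳` : `f ≈ g` iff `f - g` factors through an
object of `𝒳`. -/
abbrev stabRel : HomRel A := fun {_ _} f g => FactorsThruX A 𝒳 (f - g)

instance [IsAdditiveSubcat A 𝒳] : Congruence (stabRel A 𝒳) where
  equivalence := by
    intro X Y
    constructor
    · intro f
      obtain ⟨T, hT⟩ := IsAdditiveSubcat.nonempty (A := A) (𝒳 := 𝒳)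
      exact ⟨T, hT, 0, 0, by simp⟩
    · intro f g h
      obtain ⟨T, hT, u, v, huv⟩ := h
      exact ⟨T, hT, -u, v, by rw [Preadditive.neg_comp, huv, neg_sub]⟩
    · intro f g h h₁ h₂
      have h₃ := FactorsThruX.add h₁ h₂
      simpa using h₃
  comp_left := by
    intro X Y Z f g g' h
    obtain ⟨T, hT, u, v, huv⟩ := h
    exact ⟨T, hT, f ≫ u, v, by rw [Category.assoc, huv, Preadditive.comp_sub]⟩
  comp_right := by
    intro X Y Z f f' g h
    obtain ⟨T, hT, u, v, huv⟩ := h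
    exact ⟨T, hT, u, v ≫ g, by rw [← Category.assoc, huv, Preadditive.sub_comp]⟩

theorem stabRel_add [IsAdditiveSubcat A 𝒳] :
    ∀ ⦃X Y : A⦄ (f₁ f₂ g₁ g₂ : X ⟶ Y) (_ : stabRel A 𝒳 f₁ f₂) (_ : stabRel A 𝒳 g₁ g₂),
      stabRel A 𝒳 (f₁ + g₁) (f₂ + g₂) := by
  intro X Y f₁ f₂ g₁ g₂ h₁ h₂
  have := FactorsThruX.add h₁ h₂
  simpa [stabRel, add_sub_add_comm] using this

/-- The factor category `𝒜/[𝒳]`. -/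
abbrev StabCat := CategoryTheory.Quotient (stabRel A 𝒳)

noncomputable instance [IsAdditiveSubcat A 𝒳] : Preadditive (StabCat A 𝒳) :=
  CategoryTheory.Quotient.preadditive (stabRel A 𝒳) (stabRel_add A 𝒳)

/-- The projection functor `𝒜 ⥤ 𝒜/[𝒳]`. -/
abbrev stabFunctor : A ⥤ StabCat A 𝒳 := CategoryTheory.Quotient.functor _

instance [IsAdditiveSubcat A 𝒳] : (stabFunctor A 𝒳).Additive :=
  CategoryTheory.Quotient.functor_additive (stabRel A 𝒳) (stabRel_add A 𝒳)

/-- The homotopy category `K(𝒜/[𝒳])`. -/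
abbrev HtpyStab [IsAdditiveSubcat A 𝒳] :=
  HomotopyCategory (StabCat A 𝒳) (ComplexShape.up ℤ)

/-- The bounded homotopy category `K^b(𝒜/[𝒳])`. -/
abbrev KbStab [IsAdditiveSubcat A 𝒳] :=
  ObjectProperty.FullSubcategory (fun K : HtpyStab A 𝒳 => IsBddComplex K.as)

/-- The canonical functor `K^b(𝒜) ⥤ K^b(𝒜/[𝒳])` sending a bounded complex over `𝒜` to
the same complex with entries viewed in `𝒜/[𝒳]`. -/
noncomputable def canKbStab [IsAdditiveSubcat A 𝒳] : Kb A ⥤ KbStab A 𝒳 :=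
  ObjectProperty.lift _
    (KbInc A ⋙ (stabFunctor A 𝒳).mapHomotopyCategory (ComplexShape.up ℤ))
    (fun K => by
      obtain ⟨a, b, h⟩ := K.property
      exact ⟨a, b, fun i hi => (stabFunctor A 𝒳).map_isZero (h i hi)⟩)


/-! ### Auxiliary machinery for the proof of Theorem 3.1(1) -/

section Aux

variable {A}

/-- The quotient functor to the homotopy category, as an abbreviation. -/
noncomputable abbrev hq : CochainComplex A ℤ ⥤ HtpyCat A :=
  HomotopyCategory.quotient A (ComplexShape.up ℤ)

lemma isZero_biprod {X Y : A} (hX : IsZero X) (hY : IsZero Y) : IsZero (X ⊞ Y) := by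
  rw [IsZero.iff_id_eq_zero]
  apply biprod.hom_ext
  · apply hX.eq_of_tgt
  · apply hY.eq_of_tgt

/-- Transport a cochain complex along a family of isomorphisms of objects. -/
noncomputable def twCplx (L : CochainComplex A ℤ) (G : ℤ → A) (e : ∀ i, L.X i ≅ G i) :
    CochainComplex A ℤ where
  X := G
  d i j := (e i).inv ≫ L.d i j ≫ (e j).hom
  shape i j h := by rw [L.shape i j h]; simp
  d_comp_d' i j k _ _ := by simp

/-- The isomorphism to the transported complex. -/
noncomputable def twCplxIso (L : CochainComplex A ℤ) (G : ℤ → A) (e : ∀ i, L.X i ≅ G i) :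
    L ≅ twCplx L G e :=
  HomologicalComplex.Hom.isoOfComponents e (by intro i j _; dsimp [twCplx]; simp)

/-- Brutal truncation: degrees `≥ k` of `K`. -/
noncomputable def btrunc (K : CochainComplex A ℤ) (k : ℤ) : CochainComplex A ℤ where
  X i := if k ≤ i then K.X i else 0
  d i j :=
    if h : k ≤ i ∧ k ≤ j then
      eqToHom (if_pos h.1) ≫ K.d i j ≫ eqToHom (if_pos h.2).symm
    else 0
  shape i j hij := by
    by_cases h : k ≤ i ∧ k ≤ j
    · rw [dif_pos h, K.shape i j hij]; simp
    · rw [dif_neg h]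
  d_comp_d' i j l _ _ := by
    by_cases h1 : k ≤ i ∧ k ≤ j
    · by_cases h2 : k ≤ j ∧ k ≤ l
      · rw [dif_pos h1, dif_pos h2]; simp
      · rw [dif_neg h2, comp_zero]
    · rw [dif_neg h1, zero_comp]

/-- Inclusion of the brutal truncation. -/
noncomputable def btruncIota (K : CochainComplex A ℤ) (k : ℤ) : btrunc K k ⟶ K where
  f i := if h : k ≤ i then eqToHom (if_pos h) else 0
  comm' i j hij := by
    have hj : i + 1 = j := hij
    by_cases hi : k ≤ i
    · have hkj : k ≤ j := by omega
      rw [dif_pos hi, dif_pos hkj]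
      dsimp only [btrunc]
      rw [dif_pos ⟨hi, hkj⟩]
      simp
    · rw [dif_neg hi, zero_comp]
      dsimp only [btrunc]
      rw [dif_neg (show ¬(k ≤ i ∧ k ≤ j) from fun h => hi h.1),
        zero_comp]
      rfl

lemma btrunc_X_isZero (K : CochainComplex A ℤ) (k i : ℤ) (h : ¬ k ≤ i) :
    IsZero ((btrunc K k).X i) := by
  dsimp [btrunc]; rw [if_neg h]; exact isZero_zero A

noncomputable def btrunc_X_iso (K : CochainComplex A ℤ) (k i : ℤ) (h : k ≤ i) :
    (btrunc K k).X i ≅ K.X i :=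
  eqToIso (if_pos h)

/-- Factorization of a chain map from a stalk complex through a brutal truncation. -/
lemma factor_through_btrunc {a : A} {n k : ℤ} (hk : k ≤ n) (K : CochainComplex A ℤ)
    (F : (HomologicalComplex.single A (ComplexShape.up ℤ) n).obj a ⟶ K) :
    ∃ F' : (HomologicalComplex.single A (ComplexShape.up ℤ) n).obj a ⟶ btrunc K k,
      F' ≫ btruncIota K k = F := by
  refine ⟨{ f := fun i => if h : k ≤ i then F.f i ≫ eqToHom (if_pos h).symm else 0,
            comm' := ?_ }, ?_⟩
  · intro i j hij
    have hj : i + 1 = j := hij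
    have hd : ((HomologicalComplex.single A (ComplexShape.up ℤ) n).obj a).d i j = 0 :=
      HomologicalComplex.single_obj_d _ _ _ _ _
    by_cases hi : k ≤ i
    · have hkj : k ≤ j := by omega
      rw [dif_pos hi, dif_pos hkj]
      dsimp only [btrunc]
      rw [dif_pos ⟨hi, hkj⟩]
      have hF := F.comm' i j hij
      rw [hd, zero_comp] at hF
      rw [hd, zero_comp]
      simp only [Category.assoc, eqToHom_trans, eqToHom_refl, Category.id_comp,
        eqToHom_trans_assoc]
      rw [reassoc_of% hF, zero_comp]
    · rw [dif_neg hi, zero_comp,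
        hd, zero_comp]
  · apply HomologicalComplex.hom_ext
    intro i
    dsimp [btruncIota]
    by_cases hi : k ≤ i
    · rw [dif_pos hi, dif_pos hi]
      simp [btrunc]
    · rw [dif_neg hi, dif_neg hi, zero_comp]
      exact ((HomologicalComplex.isZero_single_obj_X (ComplexShape.up ℤ) n a i
        (by omega)).eq_of_src _ _).symm

lemma isBdd_mappingCone {M N : CochainComplex A ℤ} (φ : M ⟶ N)
    (hM : IsBddComplex M) (hN : IsBddComplex N) :
    IsBddComplex (CochainComplex.mappingCone φ) := by
  obtain ⟨a₁, b₁, h₁⟩ := hM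
  obtain ⟨a₂, b₂, h₂⟩ := hN
  refine ⟨min (a₁ - 1) a₂, max b₁ b₂, fun i hi => ?_⟩
  refine IsZero.of_iso (isZero_biprod (h₁ (i+1) (by omega)) (h₂ i (by omega)))
    (HomologicalComplex.homotopyCofiber.XIsoBiprod φ i (i+1) (by simp))

lemma isBdd_btrunc {K : CochainComplex A ℤ} (hK : IsBddComplex K) (k : ℤ) :
    IsBddComplex (btrunc K k) := by
  obtain ⟨a₁, b₁, h₁⟩ := hK
  refine ⟨a₁, b₁, fun i hi => ?_⟩
  by_cases h : k ≤ i
  · exact IsZero.of_iso (h₁ i hi) (btrunc_X_iso K k i h)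
  · exact btrunc_X_isZero K k i h

lemma isBdd_shift {K : CochainComplex A ℤ} (hK : IsBddComplex K) (n : ℤ) :
    IsBddComplex (K⟦n⟧) := by
  obtain ⟨a₁, b₁, h₁⟩ := hK
  exact ⟨a₁ - n, b₁ - n, fun i hi => h₁ (i + n) (by omega)⟩

variable {𝒳}

lemma inKbX_of_iso {K K' : HtpyCat A} (h : InKbX A 𝒳 K) (e : K ≅ K') : InKbX A 𝒳 K' := by
  obtain ⟨L, h1, h2, ⟨e'⟩⟩ := h
  exact ⟨L, h1, h2, ⟨e' ≪≫ e⟩⟩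

/-- A bounded complex whose terms are all isomorphic to objects of `𝒳` gives an
object of (the isomorphism closure of) `K^b(𝒳)`. -/
lemma inKbX_of_good [IsAdditiveSubcat A 𝒳] (L : CochainComplex A ℤ) (hbdd : IsBddComplex L)
    (hgood : ∀ i, ∃ T, 𝒳 T ∧ Nonempty (L.X i ≅ T)) :
    InKbX A 𝒳 (hq.obj L) := by
  choose T hT e using hgood
  have e' : ∀ i, L.X i ≅ T i := fun i => (e i).some
  obtain ⟨a, b, h⟩ := hbdd
  exact ⟨twCplx L T e', ⟨a, b, fun i hi => (h i hi).of_iso (e' i).symm⟩, fun i => hT i,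
    ⟨(hq).mapIso (twCplxIso L T e').symm⟩⟩

lemma inKbX_shift {K : HtpyCat A} [IsAdditiveSubcat A 𝒳] (h : InKbX A 𝒳 K) (n : ℤ) :
    InKbX A 𝒳 (K⟦n⟧) := by
  obtain ⟨L, hbdd, hX, ⟨e⟩⟩ := h
  refine inKbX_of_iso (inKbX_of_good (L⟦n⟧) (isBdd_shift hbdd n)
    (fun i => ⟨L.X (i + n), hX (i + n), ⟨Iso.refl _⟩⟩)) ?_
  exact ((hq).commShiftIso n).app L ≪≫ (shiftFunctor (HtpyCat A) n).mapIso e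

lemma inKbX_of_isZero [IsAdditiveSubcat A 𝒳] (hz : ∃ T₀, 𝒳 T₀ ∧ IsZero T₀)
    {Z : HtpyCat A} (hZ : IsZero Z) : InKbX A 𝒳 Z := by
  obtain ⟨T₀, hT₀, hz0⟩ := hz
  let E : CochainComplex A ℤ :=
    { X := fun _ => T₀, d := fun _ _ => 0, shape := fun _ _ _ => rfl,
      d_comp_d' := by intros; simp }
  have hE : IsZero (hq.obj E) := by
    rw [IsZero.iff_id_eq_zero, ← (hq).map_id]
    have h0 : 𝟙 E = 0 := by
      ext i
      exact hz0.eq_of_src _ _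
    rw [h0, Functor.map_zero]
  exact ⟨E, ⟨0, 0, fun i _ => hz0⟩, fun _ => hT₀, ⟨hE.iso hZ⟩⟩

/-- Any distinguished triangle whose outer objects are isomorphic to images of explicit
complexes has its middle object isomorphic to the image of an explicit mapping cone. -/
lemma coneModel (T : Triangle (HtpyCat A)) (hT : T ∈ distTriang (HtpyCat A))
    (M N : CochainComplex A ℤ) (e₁ : hq.obj M ≅ T.obj₁) (e₃ : hq.obj N ≅ T.obj₃) :
    ∃ (ψ : N⟦(-1 : ℤ)⟧ ⟶ M) (e₂ : hq.obj (CochainComplex.mappingCone ψ) ≅ T.obj₂),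
      hq.map (CochainComplex.mappingCone.inr ψ) ≫ e₂.hom = e₁.hom ≫ T.mor₁ := by
  obtain ⟨ψ, hψ⟩ := (hq).map_surjective
    ((((hq).commShiftIso (-1 : ℤ)).app N).hom ≫
      (shiftFunctor (HtpyCat A) (-1 : ℤ)).map e₃.hom ≫ T.invRotate.mor₁ ≫ e₁.inv)
  have hdist := HomotopyCategory.mappingCone_triangleh_distinguished ψ
  have hdist' := inv_rot_of_distTriang T hT
  obtain ⟨e', he₁, he₂⟩ := exists_iso_of_arrow_iso _ _ hdist hdist'
    (Arrow.isoMk ((((hq).commShiftIso (-1 : ℤ)).app N) ≪≫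
        (shiftFunctor (HtpyCat A) (-1 : ℤ)).mapIso e₃) e₁ (by
      change ((((hq).commShiftIso (-1 : ℤ)).app N).hom ≫
        (shiftFunctor (HtpyCat A) (-1 : ℤ)).map e₃.hom) ≫ T.invRotate.mor₁ = hq.map ψ ≫ e₁.hom
      rw [hψ]
      erw [Category.assoc, Category.assoc, Category.assoc, Category.assoc, Iso.inv_hom_id,
        Category.comp_id]
      rfl))
  refine ⟨ψ, Triangle.π₃.mapIso e', ?_⟩
  have hcomm := e'.hom.comm₂
  dsimp at hcomm he₂ ⊢
  rw [he₂] at hcomm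
  exact hcomm

/-- Morphisms between stalk complexes in distinct degrees vanish in `K^b(𝒜)`. -/
lemma subsingleton_hom_stalkKb (n : ℤ) (hn : n ≠ 0) (a b : A) :
    Subsingleton (stalkKb A n a ⟶ stalkKb A 0 b) := by
  constructor
  intro f g
  apply (KbInc A).map_injective
  obtain ⟨F, hF⟩ := (hq).map_surjective ((KbInc A).map f)
  obtain ⟨G, hG⟩ := (hq).map_surjective ((KbInc A).map g)
  rw [← hF, ← hG]
  congr 1
  ext i
  by_cases hi : i = n
  · exact (HomologicalComplex.isZero_single_obj_X (ComplexShape.up ℤ) 0 b i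
      (by omega)).eq_of_tgt _ _
  · exact (HomologicalComplex.isZero_single_obj_X (ComplexShape.up ℤ) n a i hi).eq_of_src _ _

section Calculus

variable [IsAdditiveSubcat A 𝒳] (hz : ∃ T₀, 𝒳 T₀ ∧ IsZero T₀)
include hz

lemma wx_containsIdentities : (WX A 𝒳).ContainsIdentities := by
  constructor
  intro X
  exact ⟨0, 0, 0, contractible_distinguished ((KbInc A).obj X),
    inKbX_of_isZero hz (isZero_zero _)⟩

lemma wx_isMultiplicative : (WX A 𝒳).IsMultiplicative := by
  refine { id_mem := (wx_containsIdentities hz).id_mem, comp_mem := ?_ }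
  intro X₁ X₂ X₃ u₁₂ u₂₃ h₁₂ h₂₃
  obtain ⟨Z₁₂, v₁₂, w₁₂, H₁₂, m₁₂⟩ := h₁₂
  obtain ⟨Z₂₃, v₂₃, w₂₃, H₂₃, m₂₃⟩ := h₂₃
  obtain ⟨Z₁₃, v₁₃, w₁₃, H₁₃⟩ := distinguished_cocone_triangle ((KbInc A).map (u₁₂ ≫ u₂₃))
  have oct := Triangulated.someOctahedron (u₁₂ := (KbInc A).map u₁₂) (u₂₃ := (KbInc A).map u₂₃)
    (u₁₃ := (KbInc A).map (u₁₂ ≫ u₂₃)) (by rw [Functor.map_comp]) H₁₂ H₂₃ H₁₃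
  obtain ⟨L₁₂, hb₁₂, hX₁₂, ⟨e₁₂⟩⟩ := m₁₂
  obtain ⟨L₂₃, hb₂₃, hX₂₃, ⟨e₂₃⟩⟩ := m₂₃
  obtain ⟨ψ, e₂, -⟩ := coneModel _ oct.mem L₁₂ L₂₃ e₁₂ e₂₃
  refine ⟨Z₁₃, v₁₃, w₁₃, H₁₃, inKbX_of_iso (inKbX_of_good _ ?_ ?_) e₂⟩
  · exact isBdd_mappingCone ψ (isBdd_shift hb₂₃ (-1)) hb₁₂
  · intro i
    refine ⟨L₂₃.X (i + 1 + -1) ⊞ L₁₂.X i,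
      IsAdditiveSubcat.biprod_mem (hX₂₃ _) (hX₁₂ _), ⟨?_⟩⟩
    exact HomologicalComplex.homotopyCofiber.XIsoBiprod ψ i (i+1) (by simp)

lemma wx_hasLeftCalculusOfFractions : (WX A 𝒳).HasLeftCalculusOfFractions := by
  refine { toIsMultiplicative := wx_isMultiplicative hz,
           exists_leftFraction := ?_, ext := ?_ }
  · intro X Y φ
    obtain ⟨Z, g, w, H, mem⟩ := φ.hs
    obtain ⟨L, hLb, hLX, ⟨e⟩⟩ := mem
    obtain ⟨Yab, s', f', mem'⟩ :=
      distinguished_cocone_triangle₂ (w ≫ ((KbInc A).map φ.f)⟦(1 : ℤ)⟧')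
    obtain ⟨ψ, e₂, hcomm⟩ := coneModel _ mem' (Y.obj.as) L (Iso.refl _) e
    simp only [Triangle.mk_mor₁, Iso.refl_hom, Category.id_comp] at hcomm
    have hPb : IsBddComplex (CochainComplex.mappingCone ψ) :=
      isBdd_mappingCone ψ (isBdd_shift hLb (-1)) Y.property
    have mem'' : Triangle.mk (hq.map (CochainComplex.mappingCone.inr ψ)) (e₂.hom ≫ f')
        (w ≫ ((KbInc A).map φ.f)⟦(1 : ℤ)⟧') ∈ distTriang (HtpyCat A) := by
      refine isomorphic_distinguished _ mem' _ ?_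
      refine Triangle.isoMk _ _ (Iso.refl _) e₂ (Iso.refl _) ?_ ?_ ?_
      · dsimp
        exact hcomm
      · dsimp
        exact Category.comp_id _
      · dsimp
        erw [CategoryTheory.Functor.map_id, Category.comp_id, Category.id_comp]
        rfl
    obtain ⟨bb, hb₁, hb₂⟩ := complete_distinguished_triangle_morphism₂ _ _ H mem''
      ((KbInc A).map φ.f) (𝟙 Z) (by dsimp; exact (Category.id_comp _).symm)
    let Yn : Kb A := ⟨hq.obj (CochainComplex.mappingCone ψ), hPb⟩
    refine ⟨MorphismProperty.LeftFraction.mk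
      (Y' := Yn)
      (show X ⟶ Yn from ObjectProperty.homMk bb)
      (show Y ⟶ Yn from ObjectProperty.homMk (hq.map (CochainComplex.mappingCone.inr ψ) :
        Y.obj ⟶ hq.obj (CochainComplex.mappingCone ψ)))
      ⟨Z, e₂.hom ≫ f', w ≫ ((KbInc A).map φ.f)⟦(1 : ℤ)⟧', mem'', ⟨L, hLb, hLX, ⟨e⟩⟩⟩, ?_⟩
    exact ObjectProperty.hom_ext _ hb₁.symm
  · intro X' X Y f₁ f₂ s hs hf
    obtain ⟨Z, g, w, H, mem⟩ := hs
    obtain ⟨L, hLb, hLX, ⟨e⟩⟩ := mem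
    have hsub : (KbInc A).map s ≫ ((KbInc A).map f₁ - (KbInc A).map f₂) = 0 := by
      rw [Preadditive.comp_sub, ← Functor.map_comp, ← Functor.map_comp, hf, sub_self]
    obtain ⟨qm, hqm⟩ := Triangle.yoneda_exact₂ _ H
      ((KbInc A).map f₁ - (KbInc A).map f₂) hsub
    obtain ⟨q₀, hq₀⟩ := (hq).map_surjective (e.hom ≫ qm)
    have hPb : IsBddComplex (CochainComplex.mappingCone q₀) :=
      isBdd_mappingCone q₀ hLb Y.property
    refine ⟨⟨hq.obj (CochainComplex.mappingCone q₀), hPb⟩, ?t, ?_, ?_⟩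
    case t =>
      refine ObjectProperty.homMk ?_
      exact hq.map (CochainComplex.mappingCone.inr q₀)
    · refine ⟨(hq.obj L)⟦(1 : ℤ)⟧, (CochainComplex.mappingCone.triangleh q₀).mor₃,
        -((CochainComplex.mappingCone.triangleh q₀).mor₁)⟦(1 : ℤ)⟧', ?_,
        inKbX_shift ⟨L, hLb, hLX, ⟨Iso.refl _⟩⟩ 1⟩
      exact rot_of_distTriang _ (HomotopyCategory.mappingCone_triangleh_distinguished q₀)
    · apply (KbInc A).map_injective
      rw [Functor.map_comp, Functor.map_comp]
      have h0 : qm ≫ hq.map (CochainComplex.mappingCone.inr q₀) = 0 := by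
        have h1 := comp_distTriang_mor_zero₁₂ _
          (HomotopyCategory.mappingCone_triangleh_distinguished q₀)
        change hq.map q₀ ≫ hq.map (CochainComplex.mappingCone.inr q₀) = 0 at h1
        rw [hq₀] at h1
        exact (cancel_epi e.hom).1 ((Category.assoc _ _ _).symm.trans (h1.trans comp_zero.symm))
      have : ((KbInc A).map f₁ - (KbInc A).map f₂) ≫
          hq.map (CochainComplex.mappingCone.inr q₀) = 0 := by
        erw [hqm, Category.assoc, h0, comp_zero]
      rw [← sub_eq_zero, ← Preadditive.sub_comp]
      exact this

/-- Key lemma: any morphism of the quotient from the stalk in degree `n ≥ 1`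
to a complex receiving a `WX`-morphism from the stalk in degree `0` can be
annihilated by a further `WX`-morphism. -/
lemma wx_kill {a b : A} {n : ℤ} (hn : 1 ≤ n) {Y : Kb A}
    (s : stalkKb A 0 b ⟶ Y) (hs : WX A 𝒳 s) :
    ∃ (Y' : Kb A) (t : Y ⟶ Y') (_ : WX A 𝒳 t),
      ∀ f : stalkKb A n a ⟶ Y, f ≫ t = 0 := by
  obtain ⟨T₀, hT₀, hz0⟩ := hz
  obtain ⟨Z, g, w, H, mem⟩ := hs
  obtain ⟨L, hLb, hLX, ⟨e⟩⟩ := mem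
  obtain ⟨ψ, e₂, hcomm⟩ := coneModel _ H
    ((HomologicalComplex.single A (ComplexShape.up ℤ) 0).obj b) L (Iso.refl _) e
  simp only [Triangle.mk_mor₁, Iso.refl_hom, Category.id_comp] at hcomm
  have hKb : IsBddComplex (CochainComplex.mappingCone ψ) :=
    isBdd_mappingCone ψ (isBdd_shift hLb (-1))
      ⟨0, 0, fun i hi => HomologicalComplex.isZero_single_obj_X
        (ComplexShape.up ℤ) 0 b i (by omega)⟩
  have hPb : IsBddComplex
      (CochainComplex.mappingCone (btruncIota (CochainComplex.mappingCone ψ) 1)) :=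
    isBdd_mappingCone _ (isBdd_btrunc hKb 1) hKb
  have hDgood : InKbX A 𝒳 (hq.obj (btrunc (CochainComplex.mappingCone ψ) 1)) := by
    refine inKbX_of_good _ (isBdd_btrunc hKb 1) ?_
    intro i
    by_cases hi : (1 : ℤ) ≤ i
    · refine ⟨L.X (i + 1 + -1) ⊞ T₀, IsAdditiveSubcat.biprod_mem (hLX _) hT₀, ⟨?_⟩⟩
      refine btrunc_X_iso (CochainComplex.mappingCone ψ) 1 i hi ≪≫
        HomologicalComplex.homotopyCofiber.XIsoBiprod ψ i (i+1) (by simp) ≪≫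
        biprod.mapIso (Iso.refl _) ?_
      exact (HomologicalComplex.isZero_single_obj_X (ComplexShape.up ℤ) 0 b i
        (by omega)).iso hz0
    · exact ⟨T₀, hT₀, ⟨(btrunc_X_isZero (CochainComplex.mappingCone ψ) 1 i hi).iso hz0⟩⟩
  refine ⟨⟨hq.obj (CochainComplex.mappingCone
      (btruncIota (CochainComplex.mappingCone ψ) 1)), hPb⟩, ?t, ?_, ?_⟩
  case t =>
    refine ObjectProperty.homMk ?_
    exact e₂.inv ≫ hq.map (CochainComplex.mappingCone.inr
      (btruncIota (CochainComplex.mappingCone ψ) 1))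
  · refine ⟨(hq.obj (btrunc (CochainComplex.mappingCone ψ) 1))⟦(1 : ℤ)⟧,
      (CochainComplex.mappingCone.triangleh
        (btruncIota (CochainComplex.mappingCone ψ) 1)).mor₃,
      (-((CochainComplex.mappingCone.triangleh
        (btruncIota (CochainComplex.mappingCone ψ) 1)).mor₁)⟦(1 : ℤ)⟧') ≫
        (e₂.hom)⟦(1 : ℤ)⟧', ?_, inKbX_shift hDgood 1⟩
    refine isomorphic_distinguished _
      (rot_of_distTriang _ (HomotopyCategory.mappingCone_triangleh_distinguished
        (btruncIota (CochainComplex.mappingCone ψ) 1))) _ ?_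
    refine Triangle.isoMk _ _ e₂.symm (Iso.refl _) (Iso.refl _) ?_ ?_ ?_
    · dsimp
      exact Category.comp_id _
    · dsimp
      exact (Category.comp_id _).trans (Category.id_comp _).symm
    · dsimp
      exact (Category.assoc _ _ _).trans ((_ ≫= ((shiftFunctor (HtpyCat A) (1 : ℤ)).mapIso
        e₂).hom_inv_id).trans ((Category.comp_id _).trans (Category.id_comp _).symm))
  · intro f
    apply (KbInc A).map_injective
    rw [Functor.map_comp, Functor.map_zero]
    obtain ⟨F, hF⟩ := (hq).map_surjective
      ((KbInc A).map f ≫ e₂.inv :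
        hq.obj ((HomologicalComplex.single A (ComplexShape.up ℤ) n).obj a) ⟶
        hq.obj (CochainComplex.mappingCone ψ))
    obtain ⟨F', hF'⟩ := factor_through_btrunc hn (CochainComplex.mappingCone ψ) F
    have h12 : hq.map (btruncIota (CochainComplex.mappingCone ψ) 1) ≫
        hq.map (CochainComplex.mappingCone.inr
          (btruncIota (CochainComplex.mappingCone ψ) 1)) = 0 := by
      have h1 := comp_distTriang_mor_zero₁₂ _
        (HomotopyCategory.mappingCone_triangleh_distinguished
          (btruncIota (CochainComplex.mappingCone ψ) 1))
      exact h1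
    show (KbInc A).map f ≫ e₂.inv ≫ hq.map (CochainComplex.mappingCone.inr
      (btruncIota (CochainComplex.mappingCone ψ) 1)) = 0
    erw [← Category.assoc, ← hF, ← hF', Functor.map_comp, Category.assoc, h12, comp_zero]

end Calculus

end Aux

/-- Theorem 3.1(1): for objects `a`, `b` of `𝒜` viewed as stalk complexes in degree `0`,
and any `n ≥ 1`, the Hom group `Hom_{K^b(𝒜)/K^b(𝒳)}(Σ^{-n}(a), b)` in the Verdier
quotient is zero (`Σ^{-n}(a)` being the stalk complex concentrated in degree `n`).
Vanishing of the Hom group is expressed by saying that the Hom set is a singleton. -/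
theorem verdier_hom_from_neg_shift_vanishes [IsAdditiveSubcat A 𝒳]
    (a b : A) (n : ℤ) (hn : 1 ≤ n) :
    Subsingleton ((VQ A 𝒳).obj (stalkKb A n a) ⟶ (VQ A 𝒳).obj (stalkKb A 0 b)) := by
  by_cases hz : ∃ T₀, 𝒳 T₀ ∧ IsZero T₀
  · haveI := wx_hasLeftCalculusOfFractions (A := A) (𝒳 := 𝒳) hz
    constructor
    intro φ ψ
    obtain ⟨zφ, rfl⟩ := Localization.exists_leftFraction (VQ A 𝒳) (WX A 𝒳) φ
    obtain ⟨zψ, rfl⟩ := Localization.exists_leftFraction (VQ A 𝒳) (WX A 𝒳) ψ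
    rw [MorphismProperty.LeftFraction.map_eq_iff]
    obtain ⟨Y₁, t₁, ht₁, hk₁⟩ := wx_kill hz hn zφ.s zφ.hs
    obtain ⟨Y₂, t₂, ht₂, hk₂⟩ := wx_kill hz hn zψ.s zψ.hs
    obtain ⟨orf, hor⟩ := MorphismProperty.HasLeftCalculusOfFractions.exists_leftFraction
      (MorphismProperty.RightFraction.mk (zφ.s ≫ t₁)
        ((WX A 𝒳).comp_mem _ _ zφ.hs ht₁) (zψ.s ≫ t₂))
    dsimp at hor
    refine ⟨orf.Y', t₁ ≫ orf.f, t₂ ≫ orf.s, ?_, ?_, ?_⟩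
    · rw [← Category.assoc, ← Category.assoc, ← hor]
    · rw [← Category.assoc, ← Category.assoc, hk₁ _, hk₂ _, zero_comp, zero_comp]
    · have heq : zφ.s ≫ t₁ ≫ orf.f = (zψ.s ≫ t₂) ≫ orf.s := by
        rw [← Category.assoc, ← hor]
      rw [heq]
      exact (WX A 𝒳).comp_mem _ _ ((WX A 𝒳).comp_mem _ _ zψ.hs ht₂) orf.hs
  · have hWle : WX A 𝒳 ≤ MorphismProperty.isomorphisms (Kb A) := by
      intro X Y f hf
      exfalso
      obtain ⟨Z, g, w, H, L, hLb, hLX, -⟩ := hf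
      obtain ⟨a1, b1, hzero⟩ := hLb
      exact hz ⟨L.X (b1 + 1), hLX _, hzero _ (by omega)⟩
    haveI : (𝟭 (Kb A)).IsLocalization (WX A 𝒳) :=
      Functor.IsLocalization.for_id _ hWle
    let E := Localization.uniq (VQ A 𝒳) (𝟭 (Kb A)) (WX A 𝒳)
    have iso := Localization.compUniqFunctor (VQ A 𝒳) (𝟭 (Kb A)) (WX A 𝒳)
    haveI := subsingleton_hom_stalkKb (A := A) n (by omega) a b
    constructor
    intro φ ψ
    apply E.functor.map_injective
    have hsub : (iso.app (stalkKb A n a)).inv ≫ E.functor.map φ ≫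
        (iso.app (stalkKb A 0 b)).hom =
        (iso.app (stalkKb A n a)).inv ≫ E.functor.map ψ ≫
        (iso.app (stalkKb A 0 b)).hom :=
      @Subsingleton.elim _ (subsingleton_hom_stalkKb (A := A) n (by omega) a b) _ _
    rwa [cancel_epi, cancel_mono] at hsub
end

section
/- Let X_B be an 𝒳-resolution of an object B of 𝒜 and let Y be a bounded cochain complex with all terms in 𝒳. Then every chain map Y → X_B is null-homotopic; that is, Hom_{K^-(𝒜)}(Y, X_B) = 0 in the homotopy category of bounded-above complexes. -/
/-!
Since `X_B` vanishes in positive degrees, a null-homotopy `s` of `f : Y ⟶ X_B` can be built by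
descending induction, starting from `s = 0` in degrees `≥ 0`. Once `s` is known above degree `i`,
the map `f^{i+1} - d ∘ s^{i+1} : Y^{i+1} ⟶ X_B^{i+1}` is a cycle of `Hom(Y^{i+1}, X_B)`, hence a
boundary because `Y^{i+1} ∈ 𝒳`; a preimage is the next component `s^i`.
-/

open CategoryTheory Limits

universe v u

variable {A : Type u} [Category.{v} A] [Preadditive A]

/-- An `𝒳`-resolution of `B`. -/
structure IsXResolution (𝒳 : A → Prop) (B : A) (C : CochainComplex A ℤ) where
  degZeroIso : C.X 0 ≅ B
  isZero_of_pos : ∀ i : ℤ, 0 < i → Limits.IsZero (C.X i)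
  mem_of_neg : ∀ i : ℤ, i < 0 → 𝒳 (C.X i)
  acyclic : ∀ (T : A), 𝒳 T → ∀ n : ℤ,
    (((preadditiveCoyoneda.obj (Opposite.op T)).mapHomologicalComplex
      (ComplexShape.up ℤ)).obj C).ExactAt n

namespace CochainComplex

variable {Y K : CochainComplex A ℤ}

lemma exists_comp_d_eq_of_exactAt_coyoneda {T : A} {i : ℤ}
    (hK : (((preadditiveCoyoneda.obj (Opposite.op T)).mapHomologicalComplex
      (ComplexShape.up ℤ)).obj K).ExactAt (i + 1))
    (g : T ⟶ K.X (i + 1)) (hg : g ≫ K.d (i + 1) (i + 1 + 1) = 0) :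
    ∃ s : T ⟶ K.X i, s ≫ K.d i (i + 1) = g := by
  rw [HomologicalComplex.exactAt_iff' _ i (i + 1) (i + 1 + 1) (by simp) (by simp),
    ShortComplex.ab_exact_iff] at hK
  exact hK g hg

noncomputable def homotopyZeroMk (f : Y ⟶ K) (s : ∀ i, Y.X (i + 1) ⟶ K.X i)
    (hs : ∀ i, f.f (i + 1) = Y.d (i + 1) (i + 1 + 1) ≫ s (i + 1) + s i ≫ K.d i (i + 1)) :
    Homotopy f 0 :=
  let h : ∀ i j, (ComplexShape.up ℤ).Rel j i → (Y.X i ⟶ K.X j) :=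
    fun _ j hij => (Y.XIsoOfEq hij.symm).hom ≫ s j
  have hf : f = Homotopy.nullHomotopicMap' h := by
    ext k
    obtain ⟨j, rfl⟩ : ∃ j, k = j + 1 := ⟨k - 1, by omega⟩
    rw [Homotopy.nullHomotopicMap'_f (show (ComplexShape.up ℤ).Rel j (j + 1) from rfl) rfl]
    simpa [h] using hs j
  hf ▸ Homotopy.nullHomotopy' h

variable (f : Y ⟶ K) (n : ℤ)

open Classical in
/-- The fallback `0` in degrees `< n` is never reached when every `Hom(Y^i, K)` is exact in
degree `i`. -/
noncomputable def descendingNullHomotopy (i : ℤ) : Y.X (i + 1) ⟶ K.X i :=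
  if n ≤ i then 0 else
    if h : ∃ s : Y.X (i + 1) ⟶ K.X i, s ≫ K.d i (i + 1) =
        f.f (i + 1) - Y.d (i + 1) (i + 1 + 1) ≫ descendingNullHomotopy (i + 1)
    then h.choose else 0
termination_by (n - i).toNat

lemma descendingNullHomotopy_comp_d [K.IsStrictlyLE n]
    (hY : ∀ i, (((preadditiveCoyoneda.obj (Opposite.op (Y.X i))).mapHomologicalComplex
      (ComplexShape.up ℤ)).obj K).ExactAt i) (i : ℤ) :
    descendingNullHomotopy f n i ≫ K.d i (i + 1) =
      f.f (i + 1) - Y.d (i + 1) (i + 1 + 1) ≫ descendingNullHomotopy f n (i + 1) := by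
  by_cases hi : n ≤ i
  · rw [descendingNullHomotopy, if_pos hi, descendingNullHomotopy, if_pos (by omega),
      (K.isZero_of_isStrictlyLE n (i + 1)).eq_of_tgt (f.f (i + 1)) 0]
    simp
  · have ih := descendingNullHomotopy_comp_d hY (i + 1)
    have hcycle : (f.f (i + 1) - Y.d (i + 1) (i + 1 + 1) ≫ descendingNullHomotopy f n (i + 1)) ≫
        K.d (i + 1) (i + 1 + 1) = 0 := by
      rw [Preadditive.sub_comp, Category.assoc, ih, f.comm, Preadditive.comp_sub,
        ← Category.assoc, Y.d_comp_d, zero_comp, sub_zero, sub_self]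
    have hlift := exists_comp_d_eq_of_exactAt_coyoneda (hY (i + 1)) _ hcycle
    rw [descendingNullHomotopy, if_neg hi, dif_pos hlift]
    exact hlift.choose_spec
termination_by (n - i).toNat

theorem nonempty_homotopy_zero_of_exactAt_coyoneda [K.IsStrictlyLE n]
    (hY : ∀ i, (((preadditiveCoyoneda.obj (Opposite.op (Y.X i))).mapHomologicalComplex
      (ComplexShape.up ℤ)).obj K).ExactAt i) :
    Nonempty (Homotopy f 0) :=
  ⟨homotopyZeroMk f (descendingNullHomotopy f n) fun i => by
    rw [descendingNullHomotopy_comp_d f n hY i, add_sub_cancel]⟩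

end CochainComplex

theorem chainMap_to_resolution_nullHomotopic_general {𝒳 : A → Prop} {B : A}
    {XB : CochainComplex A ℤ} (hXB : IsXResolution 𝒳 B XB)
    (Y : CochainComplex A ℤ)
    (hYmem : ∀ i : ℤ, 𝒳 (Y.X i))
    (f : Y ⟶ XB) :
    Nonempty (Homotopy f 0) := by
  have : XB.IsStrictlyLE 0 := (XB.isStrictlyLE_iff 0).2 hXB.isZero_of_pos
  exact CochainComplex.nonempty_homotopy_zero_of_exactAt_coyoneda f 0
    fun i => hXB.acyclic _ (hYmem i) i

/-- Lemma 3.2(1): if `X_B` is an `𝒳`-resolution of `B` and `Y` is a bounded complex with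
all terms in `𝒳`, then every chain map `Y ⟶ X_B` is null-homotopic; that is,
`Hom_{K^-(𝒜)}(Y, X_B) = 0`. -/
theorem chainMap_to_resolution_nullHomotopic {𝒳 : A → Prop} {B : A}
    {XB : CochainComplex A ℤ} (hXB : IsXResolution 𝒳 B XB)
    (Y : CochainComplex A ℤ)
    (hYmem : ∀ i : ℤ, 𝒳 (Y.X i))
    (hYbdd : ∃ a b : ℤ, ∀ i : ℤ, (i < a ∨ b < i) → Limits.IsZero (Y.X i))
    (f : Y ⟶ XB) :
    Nonempty (Homotopy f 0) :=
  chainMap_to_resolution_nullHomotopic_general hXB Y hYmem f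
end

section
/- If the canonical triangle functor Φ : K^b(𝒜)/K^b(𝒳) → K^b(𝒜/[𝒳]) is full, then Φ is essentially surjective (dense). -/
open CategoryTheory Limits ZeroObject Pretriangulated

set_option linter.unusedSectionVars false

universe v u

variable (A : Type u) [Category.{v} A] [Preadditive A] [HasZeroObject A]
  [HasBinaryBiproducts A]

variable (𝒳 : A → Prop)

/-!
Since `Q` is essentially surjective and `Q ⋙ Φ ≅ can`, the essential image of `Φ` is that of
`can`. The functor `Q` is also a localization at the class of morphisms whose cone lies
in `K^b(𝒳)` or is zero, which comes from a triangulated subcategory of `K^b(𝒜)` and hence admits a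
calculus of fractions. Writing a morphism of `K^b(𝒜)/K^b(𝒳)` as a fraction and using that `Φ` is
full, every morphism `can K ⟶ can L` is, up to an isomorphism of its source, `can f` for a
morphism `f` of `K^b(𝒜)`; its cone is then `can (cone f)`. So the essential image of `can` is
closed under cones. It contains the stalk complexes, and a bounded complex is an iterated cone of
stalk complexes through its stupid truncations.
-/

namespace CategoryTheory

theorem Localization.exists_iso_hom_comp_eq_map_of_full {C D E : Type*} [Category C]
    [Category D] [Category E] (L : C ⥤ D) (W : MorphismProperty C) [L.IsLocalization W]
    [W.HasRightCalculusOfFractions] (G : D ⥤ E) [G.Full] {F : C ⥤ E} (e : L ⋙ G ≅ F)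
    {X Y : C} (w : F.obj X ⟶ F.obj Y) :
    ∃ (X' : C) (f : X' ⟶ Y) (i : F.obj X' ≅ F.obj X), i.hom ≫ w = F.map f := by
  obtain ⟨v, hv⟩ := G.map_surjective (e.hom.app X ≫ w ≫ e.inv.app Y)
  obtain ⟨φ, rfl⟩ := Localization.exists_rightFraction L W v
  have : IsIso (L.map φ.s) := Localization.inverts L W _ φ.hs
  refine ⟨φ.X', φ.f, e.symm.app _ ≪≫ G.mapIso (asIso (L.map φ.s)) ≪≫ e.app X, ?_⟩
  have hφ : L.map φ.s ≫ φ.map L (Localization.inverts L W) = L.map φ.f := by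
    simp [MorphismProperty.RightFraction.map]
  have hcomm : G.map (L.map φ.s) ≫ e.hom.app X ≫ w = G.map (L.map φ.f) ≫ e.hom.app Y := by
    rw [← hφ, G.map_comp, Category.assoc, hv]
    simp
  calc _ = e.inv.app φ.X' ≫ G.map (L.map φ.s) ≫ e.hom.app X ≫ w := by simp
    _ = F.map φ.f := by rw [hcomm]; exact NatIso.naturality_1 e φ.f

end CategoryTheory

section

variable {C : Type*} [Category C] [Preadditive C]

theorem IsBddComplex.shift {K : CochainComplex C ℤ} (hK : IsBddComplex K) (n : ℤ) :
    IsBddComplex (K⟦n⟧) := by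
  obtain ⟨a, b, hK⟩ := hK
  exact ⟨a - n, b - n, fun i hi => hK (i + n) (by omega)⟩

variable [HasBinaryBiproducts C]

theorem IsBddComplex.mappingCone {K L : CochainComplex C ℤ} (f : K ⟶ L) (hK : IsBddComplex K)
    (hL : IsBddComplex L) : IsBddComplex (CochainComplex.mappingCone f) := by
  obtain ⟨a₁, b₁, hK⟩ := hK
  obtain ⟨a₂, b₂, hL⟩ := hL
  exact ⟨min (a₁ - 1) a₂, max (b₁ - 1) b₂, fun i hi =>
    (CochainComplex.mappingCone.isZero_X_iff f i).2 ⟨hK _ (by omega), hL _ (by omega)⟩⟩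

theorem CochainComplex.mappingCone_X {K L : CochainComplex C ℤ} (f : K ⟶ L) (i : ℤ) :
    (mappingCone f).X i = (K.X (i + 1) ⊞ L.X i : C) := by
  change HomologicalComplex.homotopyCofiber.X f i = _
  rw [HomologicalComplex.homotopyCofiber.X, dif_pos (by simp)]
  simp only [CochainComplex.next]

end

namespace CochainComplex

open HomologicalComplex HomComplex

variable {C : Type*} [Category C] [Preadditive C] [HasZeroObject C]

noncomputable def isoSingle (M : CochainComplex C ℤ) (n : ℤ)
    (hM : ∀ i, i ≠ n → IsZero (M.X i)) : M ≅ (single C (ComplexShape.up ℤ) n).obj (M.X n) :=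
  Hom.isoOfComponents
    (fun i => if h : i = n then
        M.XIsoOfEq h ≪≫ (singleObjXIsoOfEq (ComplexShape.up ℤ) n (M.X n) i h).symm
      else (hM i h).iso (isZero_single_obj_X (ComplexShape.up ℤ) n (M.X n) i h))
    (fun i j (hij : i + 1 = j) => by
      by_cases hj : j = n
      · exact (hM i (by omega)).eq_of_src _ _
      · exact (isZero_single_obj_X (ComplexShape.up ℤ) n (M.X n) j hj).eq_of_tgt _ _)

noncomputable abbrev stupidTruncGE (c : ℤ) (M : CochainComplex C ℤ) : CochainComplex C ℤ where
  X i := if c ≤ i then M.X i else 0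
  d i j :=
    if h : c ≤ i ∧ c ≤ j then eqToHom (if_pos h.1) ≫ M.d i j ≫ eqToHom (if_pos h.2).symm
    else 0
  shape i j hij := by
    by_cases h : c ≤ i ∧ c ≤ j
    · rw [dif_pos h, M.shape i j hij]
      simp
    · rw [dif_neg h]
  d_comp_d' i j k _ _ := by
    by_cases h : c ≤ i ∧ c ≤ j
    · by_cases h' : c ≤ j ∧ c ≤ k
      · rw [dif_pos h, dif_pos h']
        simp
      · rw [dif_neg h', comp_zero]
    · rw [dif_neg h, zero_comp]

variable (c : ℤ) (M : CochainComplex C ℤ)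

theorem stupidTruncGE_X_of_le {i : ℤ} (h : c ≤ i) : (stupidTruncGE c M).X i = M.X i :=
  if_pos h

theorem isZero_stupidTruncGE_X_of_lt {i : ℤ} (h : i < c) : IsZero ((stupidTruncGE c M).X i) := by
  rw [show (stupidTruncGE c M).X i = 0 from if_neg (by omega)]
  exact isZero_zero C

theorem isZero_stupidTruncGE_X {i : ℤ} (hi : IsZero (M.X i)) :
    IsZero ((stupidTruncGE c M).X i) := by
  by_cases h : c ≤ i
  · rwa [stupidTruncGE_X_of_le c M h]
  · exact isZero_stupidTruncGE_X_of_lt c M (by omega)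

noncomputable def stupidTruncGEι : stupidTruncGE c M ⟶ M where
  f i := if h : c ≤ i then eqToHom (if_pos h) else 0
  comm' i j (hij : i + 1 = j) := by
    dsimp [stupidTruncGE]
    by_cases hi : c ≤ i
    · have hj : c ≤ j := by omega
      rw [dif_pos hi, dif_pos hj, dif_pos ⟨hi, hj⟩]
      simp
    · rw [dif_neg hi, zero_comp, dif_neg (by tauto), zero_comp]

variable (a : ℤ)

noncomputable def dToStupidTruncGE :
    (single C (ComplexShape.up ℤ) (a + 1)).obj (M.X a) ⟶ stupidTruncGE (a + 1) M :=
  mkHomFromSingle (M.d a (a + 1) ≫ eqToHom (if_pos le_rfl).symm) (fun k _ => by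
    dsimp [stupidTruncGE]
    by_cases h : a + 1 ≤ a + 1 ∧ a + 1 ≤ k
    · rw [dif_pos h]
      simp
    · rw [dif_neg h, comp_zero])

namespace mappingConeDToStupidTruncGE

noncomputable def cochain :
    Cochain ((single C (ComplexShape.up ℤ) (a + 1)).obj (M.X a)) M (-1) :=
  Cochain.mk fun p q _ => if hp : p = a + 1 then
    (singleObjXIsoOfEq (ComplexShape.up ℤ) (a + 1) (M.X a) p hp).hom ≫
      eqToHom (congrArg M.X (by omega : a = q))
  else 0

theorem δ_cochain :
    δ (-1) 0 (cochain M a) = Cochain.ofHom (dToStupidTruncGE M a ≫ stupidTruncGEι (a + 1) M) := by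
  ext p
  by_cases hp : p = a + 1
  · subst hp
    rw [δ_v (-1) 0 (by norm_num) _ (a + 1) (a + 1) (add_zero _) a (a + 2) (by omega) (by omega)]
    simp [cochain, stupidTruncGEι, dToStupidTruncGE, mkHomFromSingle, singleObjXIsoOfEq]
  · exact (isZero_single_obj_X (ComplexShape.up ℤ) (a + 1) (M.X a) p hp).eq_of_src _ _

variable [HasBinaryBiproducts C]

noncomputable def desc : mappingCone (dToStupidTruncGE M a) ⟶ M :=
  mappingCone.desc _ (cochain M a) (stupidTruncGEι (a + 1) M) (δ_cochain M a)

theorem isIso_desc_f_self : IsIso ((desc M a).f a) := by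
  refine ⟨(singleObjXSelf (ComplexShape.up ℤ) (a + 1) (M.X a)).inv ≫
    (mappingCone.inl (dToStupidTruncGE M a)).v (a + 1) a (by omega), ?_, ?_⟩
  · rw [mappingCone.ext_from_iff _ (a + 1) a rfl]
    refine ⟨?_, (isZero_stupidTruncGE_X_of_lt _ _ (by omega)).eq_of_src _ _⟩
    rw [← Category.assoc, desc, mappingCone.inl_v_desc_f]
    simp [cochain, singleObjXSelf]
  · rw [Category.assoc, desc, mappingCone.inl_v_desc_f]
    simp [cochain, singleObjXSelf]

theorem isIso_desc_f_of_lt {p : ℤ} (hp : a < p) : IsIso ((desc M a).f p) := by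
  refine ⟨eqToHom (stupidTruncGE_X_of_le (a + 1) M hp).symm ≫
    (mappingCone.inr (dToStupidTruncGE M a)).f p, ?_, ?_⟩
  · rw [mappingCone.ext_from_iff _ (p + 1) p rfl]
    refine ⟨(isZero_single_obj_X _ _ _ _ (by omega)).eq_of_src _ _, ?_⟩
    rw [← Category.assoc, desc, mappingCone.inr_f_desc_f]
    simp [stupidTruncGEι, dif_pos hp]
  · rw [Category.assoc, desc, mappingCone.inr_f_desc_f]
    simp [stupidTruncGEι, dif_pos hp]

theorem isIso_desc (hM : ∀ i < a, IsZero (M.X i)) : IsIso (desc M a) := by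
  have (p : ℤ) : IsIso ((desc M a).f p) := by
    rcases lt_trichotomy p a with hp | rfl | hp
    · exact isIso_of_source_target_iso_zero _
        ((mappingCone.isZero_X_iff _ p).2 ⟨isZero_single_obj_X _ _ _ _ (by omega),
          isZero_stupidTruncGE_X_of_lt _ _ (by omega)⟩).isoZero (hM p hp).isoZero
    · exact isIso_desc_f_self M p
    · exact isIso_desc_f_of_lt M a hp
  exact Hom.isIso_of_components _

end mappingConeDToStupidTruncGE

noncomputable def mappingConeDToStupidTruncGEIso [HasBinaryBiproducts C]
    (hM : ∀ i < a, IsZero (M.X i)) : mappingCone (dToStupidTruncGE M a) ≅ M :=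
  have := mappingConeDToStupidTruncGE.isIso_desc M a hM
  asIso (mappingConeDToStupidTruncGE.desc M a)

end CochainComplex

namespace HomotopyCategory

open CochainComplex HomologicalComplex

variable {C : Type*} [Category C] [Preadditive C] [HasZeroObject C] [HasBinaryBiproducts C]

theorem exists_mappingCone_iso_obj₃ (T : Triangle (HomotopyCategory C (ComplexShape.up ℤ)))
    (hT : T ∈ distTriang _) {K L : CochainComplex C ℤ} (e₁ : (quotient _ _).obj K ≅ T.obj₁)
    (e₂ : (quotient _ _).obj L ≅ T.obj₂) :
    ∃ f : K ⟶ L, Nonempty ((quotient _ _).obj (mappingCone f) ≅ T.obj₃) := by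
  obtain ⟨f, hf⟩ := (quotient _ _).map_surjective (e₁.hom ≫ T.mor₁ ≫ e₂.inv)
  refine ⟨f, ⟨Triangle.π₃.mapIso (isoTriangleOfIso₁₂ _ T
    (mappingCone_triangleh_distinguished f) hT e₁ e₂ ?_)⟩⟩
  change (quotient _ _).map f ≫ e₂.hom = e₁.hom ≫ T.mor₁
  simp [hf]

variable (C) in
abbrev isBdd : ObjectProperty (HomotopyCategory C (ComplexShape.up ℤ)) :=
  fun K => IsBddComplex K.as

instance : (isBdd C).ContainsZero where
  exists_zero := ⟨(quotient _ _).obj 0, (quotient _ _).map_isZero (isZero_zero _),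
    ⟨0, 0, fun i _ => (eval C _ i).map_isZero (isZero_zero _)⟩⟩

instance : (isBdd C).IsStableUnderShift ℤ where
  isStableUnderShiftBy n := ⟨fun K hK => by
    obtain ⟨K, rfl⟩ := K.quotient_obj_surjective
    rw [ObjectProperty.prop_shift_iff, shift_quotient_obj]
    exact hK.shift n⟩

instance : (isBdd C).IsTriangulatedClosed₃ where
  ext₃' T hT h₁ h₂ := by
    obtain ⟨f, ⟨e⟩⟩ := exists_mappingCone_iso_obj₃ T hT (Iso.refl _) (Iso.refl _)
    exact ⟨_, h₁.mappingCone f h₂, ⟨e.symm⟩⟩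

instance : (isBdd C).IsTriangulated where
  toIsTriangulatedClosed₂ := .of_isTriangulatedClosed₃

theorem prop_quotient_of_isBddComplex
    (P : ObjectProperty (HomotopyCategory C (ComplexShape.up ℤ)))
    [P.IsClosedUnderIsomorphisms] [P.IsTriangulatedClosed₃]
    (hP : ∀ (n : ℤ) (x : C), P ((quotient _ _).obj ((single C (ComplexShape.up ℤ) n).obj x)))
    {M : CochainComplex C ℤ} (hM : IsBddComplex M) : P ((quotient _ _).obj M) := by
  suffices ∀ (n : ℕ) (a : ℤ) (M : CochainComplex C ℤ),
      (∀ i, i < a ∨ a + n < i → IsZero (M.X i)) → P ((quotient _ _).obj M) by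
    obtain ⟨a, b, hM⟩ := hM
    exact this (b - a).toNat a M fun i hi => hM i (by omega)
  intro n
  induction n with
  | zero =>
    intro a M hM
    exact P.prop_of_iso ((quotient _ _).mapIso (M.isoSingle a fun i hi => hM i (by omega))).symm
      (hP a (M.X a))
  | succ n ih =>
    intro a M hM
    have hσ := ih (a + 1) (stupidTruncGE (a + 1) M) fun i hi => hi.elim
      (isZero_stupidTruncGE_X_of_lt _ _) fun hi => isZero_stupidTruncGE_X _ _ (hM i (by omega))
    exact P.prop_of_iso
      ((quotient _ _).mapIso (mappingConeDToStupidTruncGEIso M a fun i hi => hM i (.inl hi)))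
      (P.ext_of_isTriangulatedClosed₃ _ (mappingCone_triangleh_distinguished _) (hP _ _) hσ)

end HomotopyCategory

section VerdierQuotient

instance : ObjectProperty.IsClosedUnderIsomorphisms (InKbX A 𝒳) :=
  ⟨fun e ⟨L, hL, hL𝒳, ⟨e'⟩⟩ => ⟨L, hL, hL𝒳, ⟨e' ≪≫ e⟩⟩⟩

instance : ObjectProperty.IsStableUnderShift (InKbX A 𝒳) ℤ where
  isStableUnderShiftBy n := ⟨fun _ ⟨L, hL, hL𝒳, ⟨e⟩⟩ =>
    ⟨L⟦n⟧, hL.shift n, fun i => hL𝒳 (i + n),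
      ⟨eqToIso (HomotopyCategory.shift_quotient_obj L n).symm ≪≫ (shiftFunctor _ n).mapIso e⟩⟩⟩

instance [IsAdditiveSubcat A 𝒳] : ObjectProperty.IsTriangulatedClosed₃ (InKbX A 𝒳) :=
  .mk' fun T hT ⟨K, hK, hK𝒳, ⟨e₁⟩⟩ ⟨L, hL, hL𝒳, ⟨e₂⟩⟩ => by
    obtain ⟨f, ⟨e⟩⟩ := HomotopyCategory.exists_mappingCone_iso_obj₃ T hT e₁ e₂
    refine ⟨_, hK.mappingCone f hL, fun i => ?_, ⟨e⟩⟩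
    rw [CochainComplex.mappingCone_X]
    exact IsAdditiveSubcat.biprod_mem (hK𝒳 _) (hL𝒳 _)

/-- `𝒳` need not contain a zero object, so zero objects are added to make this a triangulated
subcategory. -/
def inKbXOrZero : ObjectProperty (HtpyCat A) := fun K => InKbX A 𝒳 K ∨ IsZero K

instance : (inKbXOrZero A 𝒳).IsClosedUnderIsomorphisms :=
  ⟨fun e h => h.imp (ObjectProperty.prop_of_iso (InKbX A 𝒳) e) (·.of_iso e.symm)⟩

instance [IsAdditiveSubcat A 𝒳] : (inKbXOrZero A 𝒳).IsTriangulated where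
  exists_zero := ⟨0, isZero_zero _, Or.inr (isZero_zero _)⟩
  isStableUnderShiftBy n := ⟨fun K hK => hK.imp (ObjectProperty.le_shift (InKbX A 𝒳) n K)
    (shiftFunctor _ n).map_isZero⟩
  toIsTriangulatedClosed₂ := .mk' fun T hT h₁ h₃ => by
    rcases h₁ with h₁ | h₁
    · rcases h₃ with h₃ | h₃
      · have : ObjectProperty.IsTriangulatedClosed₂ (InKbX A 𝒳) := .of_isTriangulatedClosed₃
        exact Or.inl (ObjectProperty.ext_of_isTriangulatedClosed₂ (InKbX A 𝒳) T hT h₁ h₃)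
      · have := (Triangle.isZero₃_iff_isIso₁ _ hT).1 h₃
        exact Or.inl (ObjectProperty.prop_of_iso (InKbX A 𝒳) (asIso T.mor₁) h₁)
    · have := (Triangle.isZero₁_iff_isIso₂ _ hT).1 h₁
      exact (inKbXOrZero A 𝒳).prop_of_iso (asIso T.mor₂).symm h₃

abbrev trWX : MorphismProperty (Kb A) := ((inKbXOrZero A 𝒳).inverseImage (KbInc A)).trW

theorem WX_le_trWX : WX A 𝒳 ≤ trWX A 𝒳 := fun _ _ f ⟨Z, g, h, hT, hZ⟩ =>
  (ObjectProperty.inverseImage_trW_iff _ _ f).2 ⟨Z, g, h, hT, Or.inl hZ⟩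

theorem trWX_isInvertedBy_VQ : (trWX A 𝒳).IsInvertedBy (VQ A 𝒳) := fun _ _ f hf => by
  obtain ⟨Z, g, h, hT, hZ | hZ⟩ := (ObjectProperty.inverseImage_trW_iff _ _ f).1 hf
  · exact Localization.inverts _ (WX A 𝒳) f ⟨Z, g, h, hT, hZ⟩
  · have : IsIso ((KbInc A).map f) := (Triangle.isZero₃_iff_isIso₁ _ hT).1 hZ
    have := isIso_of_reflects_iso f (KbInc A)
    infer_instance

instance : (VQ A 𝒳).IsLocalization (trWX A 𝒳) :=
  .of_equivalence_source (VQ A 𝒳) (WX A 𝒳) (VQ A 𝒳) (trWX A 𝒳) CategoryTheory.Equivalence.refl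
    (fun _ _ f hf => (trWX A 𝒳).le_isoClosure _ (WX_le_trWX A 𝒳 f hf))
    (trWX_isInvertedBy_VQ A 𝒳) (Iso.refl _)

end VerdierQuotient

section EssentialImage

variable [IsAdditiveSubcat A 𝒳]

noncomputable instance : HasZeroObject (StabCat A 𝒳) :=
  ⟨⟨_, (stabFunctor A 𝒳).map_isZero (isZero_zero A)⟩⟩

noncomputable instance : HasBinaryBiproducts (StabCat A 𝒳) :=
  have := preservesBinaryBiproducts_of_preservesBiproducts (stabFunctor A 𝒳)
  ⟨fun X Y => HasBinaryBiproduct.mk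
    ⟨_, isBinaryBilimitOfPreserves (stabFunctor A 𝒳) (BinaryBiproduct.isBilimit X.as Y.as)⟩⟩

/-- Definitionally `canKbStab A 𝒳 ⋙ ObjectProperty.ι _`. -/
noncomputable abbrev canHtpyStab : Kb A ⥤ HtpyStab A 𝒳 :=
  KbInc A ⋙ (stabFunctor A 𝒳).mapHomotopyCategory (ComplexShape.up ℤ)

variable {A 𝒳}

theorem isTriangulatedClosed₃_essImage_canHtpyStab (Φ : VerdierQuot A 𝒳 ⥤ KbStab A 𝒳) [Φ.Full]
    (e : VQ A 𝒳 ⋙ Φ ≅ canKbStab A 𝒳) : (canHtpyStab A 𝒳).essImage.IsTriangulatedClosed₃ :=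
  .mk' fun T hT ⟨K, ⟨e₁⟩⟩ ⟨L, ⟨e₂⟩⟩ => by
    obtain ⟨K', f, i, hi⟩ := Localization.exists_iso_hom_comp_eq_map_of_full (VQ A 𝒳) (trWX A 𝒳)
      (Φ ⋙ ObjectProperty.ι _) (F := canHtpyStab A 𝒳)
      ((Functor.associator _ _ _).symm ≪≫ Functor.isoWhiskerRight e _)
      (e₁.hom ≫ T.mor₁ ≫ e₂.inv)
    obtain ⟨Z, g, h, hf⟩ := distinguished_cocone_triangle f
    refine ⟨Z, ⟨Triangle.π₃.mapIso (isoTriangleOfIso₁₂ _ T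
      ((canHtpyStab A 𝒳).map_distinguished _ hf) hT (i ≪≫ e₁) e₂ ?_)⟩⟩
    change (canHtpyStab A 𝒳).map f ≫ e₂.hom = (i.hom ≫ e₁.hom) ≫ T.mor₁
    rw [← hi]
    simp

theorem single_mem_essImage_canHtpyStab (n : ℤ) (x : StabCat A 𝒳) :
    (canHtpyStab A 𝒳).essImage ((HomotopyCategory.quotient _ _).obj
      ((HomologicalComplex.single _ (ComplexShape.up ℤ) n).obj x)) :=
  ⟨stalkKb A n x.as, ⟨((stabFunctor A 𝒳).mapHomotopyCategoryFactors _).app _ ≪≫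
    (HomotopyCategory.quotient _ _).mapIso
      ((HomologicalComplex.singleMapHomologicalComplex (stabFunctor A 𝒳) _ n).app x.as)⟩⟩

end EssentialImage

/-- Proposition 4.1(1): if the canonical triangle functor
`Φ : K^b(𝒜)/K^b(𝒳) ⥤ K^b(𝒜/[𝒳])` (characterized by `Φ ∘ Q ≅ can`, where `Q` is the
Verdier quotient functor and `can : K^b(𝒜) ⥤ K^b(𝒜/[𝒳])` is the canonical functor)
is full, then it is essentially surjective (dense). -/
theorem canonical_functor_essSurj_of_full [IsAdditiveSubcat A 𝒳]
    (Φ : VerdierQuot A 𝒳 ⥤ KbStab A 𝒳)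
    (hΦ : Nonempty (VQ A 𝒳 ⋙ Φ ≅ canKbStab A 𝒳))
    (hfull : Φ.Full) :
    Φ.EssSurj := by
  obtain ⟨e⟩ := hΦ
  have := isTriangulatedClosed₃_essImage_canHtpyStab Φ e
  refine ⟨fun M => ?_⟩
  obtain ⟨K, ⟨i⟩⟩ := HomotopyCategory.prop_quotient_of_isBddComplex _
    single_mem_essImage_canHtpyStab M.property
  exact ⟨(VQ A 𝒳).obj K, ⟨e.app K ≪≫ (ObjectProperty.ι _).preimageIso i⟩⟩
end
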